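/- Let K⁺, K⁻ : ℕ → ℕ → ℝ be nonnegative symmetric kernels, K̂ a nonnegative symmetric majorant kernel with K̂ ≥ max{K⁺, K⁻} pointwise, and μ⊕, μ⊙, μ⊖ : ℕ → ℝ nonnegative finitely supported functions. Set K_S⁰ := min{K⁺, K⁻}, Δ_S⁺ := max{K⁺ − K⁻, 0}, Δ_S⁻ := max{K⁻ − K⁺, 0}; T₊(y) := Σ_x K̂(x,y)μ⊕(x), T₋(y) := Σ_z K̂(y,z)μ⊖(z); r⁻(x,y,z) := K̂(x,y)K⁻(y,z)/T₊(y), r⁺(x,y,z) := K̂(y,z)K⁺(x,y)/T₋(y); K_D⁰ := min{r⁻, r⁺}, Δ_D⁺ := max{r⁺ − r⁻, 0}, Δ_D⁻ := max{r⁻ − r⁺, 0}. Assume T₊(y) > 0 and T₋(y) > 0 for every y in the support of μ⊙. Then for every f : ℕ → ℝ the following identity holds: [ (1/2)Σ_{x,y≥1}(f(x+y) − f(x) − f(y))K_S⁰(x,y)μ⊙(x)μ⊙(y) − Σ_{x,y≥1} f(x)(Δ_S⁺ + Δ_S⁻)(x,y)μ⊙(x)μ⊙(y) − Σ_{x,y,z≥1}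 f(y)(K_D⁰ + Δ_D⁺ + Δ_D⁻)(x,y,z)μ⊕(x)μ⊙(y)μ⊖(z) ] + [ (1/2)Σ_{x,y≥1} f(x+y)Δ_S⁺(x,y)μ⊙(x)μ⊙(y) + Σ_{x,y≥1} f(x)Δ_S⁻(x,y)μ⊙(x)μ⊙(y) + Σ_{x,y,z≥1}(f(x+y) − f(x))(K_D⁰ + Δ_D⁺)(x,y,z)μ⊕(x)μ⊙(y)μ⊖(z) + Σ_{x,y,z≥1} f(y)Δ_D⁻(x,y,z)μ⊕(x)μ⊙(y)μ⊖(z) + (1/2)Σ_{x,y≥1}(f(x+y) − f(x) − f(y))K⁺(x,y)μ⊕(x)μ⊕(y) ] = (1/2)Σ_{x,y≥1}(f(x+y) − f(x) − f(y))K⁺(x,y)(μ⊙ + μ⊕)(x)(μ⊙ + μ⊕)(y). Consequently, if (μ_t^⊕, μ_t^⊙, μ_t^⊖) solves the coupled limit system of differential equations for all test functions, then μ_t^+ := μ_t^⊙ + μ_t^⊕ satisfies Smoluchowski's coagulation equation with kernel K⁺. -/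

import Mathlib

/-!
On a finite set `t` of positive sizes carrying the supports of `μ⊕, μ⊙, μ⊖` every `finsum` is a
`Finset` sum. Since `K_S⁰ + Δ_S⁺ = K⁺` and `Δ_S⁺` is symmetric, the `⊙⊙` terms reassemble into half
the coagulation form of `K⁺` at `μ⊙`, the `Δ_S⁻` terms cancelling. Since `K_D⁰ + Δ_D⁺ = r⁺` and
`Σ_z r⁺(x, y, z) μ⊖(z) = K⁺(x, y)` by the choice of `T₋`, the three-body terms collapse to the cross
term of `K⁺` between `μ⊕` and `μ⊙`. With the `⊕⊕` term this is the bilinear expansion of the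
coagulation form of `K⁺` at `μ⊙ + μ⊕`.
-/

open Finset

theorem min_add_max_sub_zero {α : Type*} [AddCommGroup α] [LinearOrder α] [IsOrderedAddMonoid α]
    (a b : α) : min a b + max (a - b) 0 = a := by
  rcases le_total a b with h | h
  · rw [min_eq_left h, max_eq_right (sub_nonpos.mpr h), add_zero]
  · rw [min_eq_right h, max_eq_left (sub_nonneg.mpr h), add_sub_cancel]

theorem sum_mul_div_mul_eq_of_sum_eq {ι : Type*} (t : Finset ι) {w η : ι → ℝ} {T : ℝ}
    (hT : ∑ z ∈ t, w z * η z = T) (h : T ≠ 0) (c : ℝ) : ∑ z ∈ t, w z * c / T * η z = c := by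
  have hterm : ∀ z, w z * c / T * η z = c / T * (w z * η z) := fun z => by ring
  simp_rw [hterm, ← mul_sum, hT, div_mul_cancel₀ _ h]

section FinsumToSum

variable {α R : Type*} [NonUnitalNonAssocSemiring R] {s : Set α} {t : Finset α}

theorem finsum_mem_mul_eq_sum (hts : ↑t ⊆ s) {c : α → R} (hc : ∀ x ∈ s, x ∉ t → c x = 0)
    (C : α → R) : ∑ᶠ x ∈ s, C x * c x = ∑ x ∈ t, C x * c x :=
  finsum_mem_eq_sum_of_subset _
    (fun x ⟨hxs, hx⟩ => by_contra fun hxt => hx (by simp [hc x hxs hxt])) hts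

theorem finsum_mem_finsum_mem_mul_eq_sum_sum (hts : ↑t ⊆ s) {a b : α → R}
    (ha : ∀ x ∈ s, x ∉ t → a x = 0) (hb : ∀ x ∈ s, x ∉ t → b x = 0) (C : α → α → R) :
    ∑ᶠ x ∈ s, ∑ᶠ y ∈ s, C x y * a x * b y = ∑ x ∈ t, ∑ y ∈ t, C x y * a x * b y := by
  simp_rw [finsum_mem_mul_eq_sum hts hb]
  refine finsum_mem_eq_sum_of_subset _ (fun x ⟨hxs, hx⟩ => by_contra fun hxt => hx ?_) hts
  exact sum_eq_zero fun y _ => by rw [ha x hxs hxt, mul_zero, zero_mul]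

theorem finsum_mem_finsum_mem_finsum_mem_mul_eq_sum_sum_sum (hts : ↑t ⊆ s) {a b c : α → R}
    (ha : ∀ x ∈ s, x ∉ t → a x = 0) (hb : ∀ x ∈ s, x ∉ t → b x = 0)
    (hc : ∀ x ∈ s, x ∉ t → c x = 0) (C : α → α → α → R) :
    ∑ᶠ x ∈ s, ∑ᶠ y ∈ s, ∑ᶠ z ∈ s, C x y z * a x * b y * c z
      = ∑ x ∈ t, ∑ y ∈ t, ∑ z ∈ t, C x y z * a x * b y * c z := by
  simp_rw [finsum_mem_finsum_mem_mul_eq_sum_sum hts hb hc]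
  refine finsum_mem_eq_sum_of_subset _ (fun x ⟨hxs, hx⟩ => by_contra fun hxt => hx ?_) hts
  exact sum_eq_zero fun y _ => sum_eq_zero fun z _ => by rw [ha x hxs hxt]; simp

end FinsumToSum

section Coagulation

variable {α : Type*} (t : Finset α) (f : α → ℝ)

theorem sum_sum_apply_right_mul_of_symm {K : α → α → ℝ} (hK : ∀ x y, K x y = K y x) (μ : α → ℝ) :
    ∑ x ∈ t, ∑ y ∈ t, f y * K x y * μ x * μ y = ∑ x ∈ t, ∑ y ∈ t, f x * K x y * μ x * μ y := by
  rw [sum_comm]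
  exact sum_congr rfl fun x _ => sum_congr rfl fun y _ => by rw [hK]; ring

variable [AddCommMagma α]

theorem sum_sum_coag_swap {K : α → α → ℝ} (hK : ∀ x y, K x y = K y x) (μ ν : α → ℝ) :
    ∑ x ∈ t, ∑ y ∈ t, (f (x + y) - f x - f y) * K x y * μ x * ν y
      = ∑ x ∈ t, ∑ y ∈ t, (f (x + y) - f x - f y) * K x y * ν x * μ y := by
  rw [sum_comm]
  exact sum_congr rfl fun x _ => sum_congr rfl fun y _ => by rw [hK, add_comm y x]; ring

theorem half_sum_sum_coag_add {K : α → α → ℝ} (hK : ∀ x y, K x y = K y x) (μ ν : α → ℝ) :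
    (1 / 2 : ℝ) * ∑ x ∈ t, ∑ y ∈ t, (f (x + y) - f x - f y) * K x y * (μ x + ν x) * (μ y + ν y)
      = (1 / 2 : ℝ) * ∑ x ∈ t, ∑ y ∈ t, (f (x + y) - f x - f y) * K x y * μ x * μ y
        + ∑ x ∈ t, ∑ y ∈ t, (f (x + y) - f x - f y) * K x y * ν x * μ y
        + (1 / 2 : ℝ) * ∑ x ∈ t, ∑ y ∈ t, (f (x + y) - f x - f y) * K x y * ν x * ν y := by
  have hexpand :
      ∑ x ∈ t, ∑ y ∈ t, (f (x + y) - f x - f y) * K x y * (μ x + ν x) * (μ y + ν y)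
        = ∑ x ∈ t, ∑ y ∈ t, (f (x + y) - f x - f y) * K x y * μ x * μ y
          + ∑ x ∈ t, ∑ y ∈ t, (f (x + y) - f x - f y) * K x y * μ x * ν y
          + ∑ x ∈ t, ∑ y ∈ t, (f (x + y) - f x - f y) * K x y * ν x * μ y
          + ∑ x ∈ t, ∑ y ∈ t, (f (x + y) - f x - f y) * K x y * ν x * ν y := by
    simp only [← sum_add_distrib]
    exact sum_congr rfl fun x _ => sum_congr rfl fun y _ => by ring
  linarith [sum_sum_coag_swap t f hK μ ν]

theorem sum_sum_coag_of_kernel_split (μ : α → ℝ) (K K₀ Δ Δ' : α → α → ℝ)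
    (hsplit : ∀ x y, K₀ x y + Δ x y = K x y) (hΔ : ∀ x y, Δ x y = Δ y x) :
    (1 / 2 : ℝ) * ∑ x ∈ t, ∑ y ∈ t, (f (x + y) - f x - f y) * K₀ x y * μ x * μ y
      - ∑ x ∈ t, ∑ y ∈ t, f x * (Δ x y + Δ' x y) * μ x * μ y
      + (1 / 2 : ℝ) * ∑ x ∈ t, ∑ y ∈ t, f (x + y) * Δ x y * μ x * μ y
      + ∑ x ∈ t, ∑ y ∈ t, f x * Δ' x y * μ x * μ y
      = (1 / 2 : ℝ) * ∑ x ∈ t, ∑ y ∈ t, (f (x + y) - f x - f y) * K x y * μ x * μ y := by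
  have hkernel : ∑ x ∈ t, ∑ y ∈ t, (f (x + y) - f x - f y) * K x y * μ x * μ y
      = ∑ x ∈ t, ∑ y ∈ t, (f (x + y) - f x - f y) * K₀ x y * μ x * μ y
        + ∑ x ∈ t, ∑ y ∈ t, (f (x + y) - f x - f y) * Δ x y * μ x * μ y := by
    simp only [← sum_add_distrib, ← hsplit]
    exact sum_congr rfl fun x _ => sum_congr rfl fun y _ => by ring
  have hgain : ∑ x ∈ t, ∑ y ∈ t, f (x + y) * Δ x y * μ x * μ y
      = ∑ x ∈ t, ∑ y ∈ t, (f (x + y) - f x - f y) * Δ x y * μ x * μ y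
        + ∑ x ∈ t, ∑ y ∈ t, f x * Δ x y * μ x * μ y
        + ∑ x ∈ t, ∑ y ∈ t, f y * Δ x y * μ x * μ y := by
    simp only [← sum_add_distrib]
    exact sum_congr rfl fun x _ => sum_congr rfl fun y _ => by ring
  have hloss : ∑ x ∈ t, ∑ y ∈ t, f x * (Δ x y + Δ' x y) * μ x * μ y
      = ∑ x ∈ t, ∑ y ∈ t, f x * Δ x y * μ x * μ y
        + ∑ x ∈ t, ∑ y ∈ t, f x * Δ' x y * μ x * μ y := by
    simp only [← sum_add_distrib]
    exact sum_congr rfl fun x _ => sum_congr rfl fun y _ => by ring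
  linarith [sum_sum_apply_right_mul_of_symm t f hΔ μ]

theorem sum_sum_sum_coag_of_rate_split (K : α → α → ℝ) (r D₀ Δ Δ' : α → α → α → ℝ)
    (μ ν η : α → ℝ) (hsplit : ∀ x y z, D₀ x y z + Δ x y z = r x y z)
    (hnorm : ∀ x y, ν y ≠ 0 → ∑ z ∈ t, r x y z * η z = K x y) :
    ∑ x ∈ t, ∑ y ∈ t, ∑ z ∈ t, (f (x + y) - f x) * (D₀ x y z + Δ x y z) * μ x * ν y * η z
      + ∑ x ∈ t, ∑ y ∈ t, ∑ z ∈ t, f y * Δ' x y z * μ x * ν y * η z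
      - ∑ x ∈ t, ∑ y ∈ t, ∑ z ∈ t,
          f y * (D₀ x y z + Δ x y z + Δ' x y z) * μ x * ν y * η z
      = ∑ x ∈ t, ∑ y ∈ t, (f (x + y) - f x - f y) * K x y * μ x * ν y := by
  simp only [← sum_add_distrib, ← sum_sub_distrib]
  refine sum_congr rfl fun x _ => sum_congr rfl fun y _ => ?_
  rcases eq_or_ne (ν y) 0 with hν | hν
  · simp [hν]
  · rw [← hnorm x y hν, mul_sum, sum_mul, sum_mul]
    exact sum_congr rfl fun z _ => by rw [← hsplit]; ring

end Coagulation

theorem coupled_limit_plus_marginal_smoluchowski_general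
    (Kp Km Khat : ℕ → ℕ → ℝ)
    (hKpSymm : ∀ x y, Kp x y = Kp y x) (hKmSymm : ∀ x y, Km x y = Km y x)
    (μp μo μm : ℕ → ℝ)
    (hμpFin : (Function.support μp).Finite) (hμoFin : (Function.support μo).Finite)
    (hμmFin : (Function.support μm).Finite) :
    let S : Set ℕ := {n : ℕ | 1 ≤ n}
    let KS0 : ℕ → ℕ → ℝ := fun x y => min (Kp x y) (Km x y)
    let ΔSp : ℕ → ℕ → ℝ := fun x y => max (Kp x y - Km x y) 0
    let ΔSm : ℕ → ℕ → ℝ := fun x y => max (Km x y - Kp x y) 0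
    let Tp : ℕ → ℝ := fun y => ∑ᶠ x ∈ S, Khat x y * μp x
    let Tm : ℕ → ℝ := fun y => ∑ᶠ z ∈ S, Khat y z * μm z
    let rm : ℕ → ℕ → ℕ → ℝ := fun x y z => Khat x y * Km y z / Tp y
    let rp : ℕ → ℕ → ℕ → ℝ := fun x y z => Khat y z * Kp x y / Tm y
    let KD0 : ℕ → ℕ → ℕ → ℝ := fun x y z => min (rm x y z) (rp x y z)
    let ΔDp : ℕ → ℕ → ℕ → ℝ := fun x y z => max (rp x y z - rm x y z) 0
    let ΔDm : ℕ → ℕ → ℕ → ℝ := fun x y z => max (rm x y z - rp x y z) 0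
    (∀ y ∈ Function.support μo, 0 < Tp y ∧ 0 < Tm y) →
    ∀ f : ℕ → ℝ,
      (((1 : ℝ) / 2) * ∑ᶠ x ∈ S, ∑ᶠ y ∈ S,
            (f (x + y) - f x - f y) * KS0 x y * μo x * μo y
        - (∑ᶠ x ∈ S, ∑ᶠ y ∈ S, f x * (ΔSp x y + ΔSm x y) * μo x * μo y)
        - (∑ᶠ x ∈ S, ∑ᶠ y ∈ S, ∑ᶠ z ∈ S,
            f y * (KD0 x y z + ΔDp x y z + ΔDm x y z) * μp x * μo y * μm z))
      +
      (((1 : ℝ) / 2) * ∑ᶠ x ∈ S, ∑ᶠ y ∈ S, f (x + y) * ΔSp x y * μo x * μo y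
        + (∑ᶠ x ∈ S, ∑ᶠ y ∈ S, f x * ΔSm x y * μo x * μo y)
        + (∑ᶠ x ∈ S, ∑ᶠ y ∈ S, ∑ᶠ z ∈ S,
            (f (x + y) - f x) * (KD0 x y z + ΔDp x y z) * μp x * μo y * μm z)
        + (∑ᶠ x ∈ S, ∑ᶠ y ∈ S, ∑ᶠ z ∈ S,
            f y * ΔDm x y z * μp x * μo y * μm z)
        + ((1 : ℝ) / 2) * ∑ᶠ x ∈ S, ∑ᶠ y ∈ S,
            (f (x + y) - f x - f y) * Kp x y * μp x * μp y)
      =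
      ((1 : ℝ) / 2) * ∑ᶠ x ∈ S, ∑ᶠ y ∈ S,
          (f (x + y) - f x - f y) * Kp x y * (μo x + μp x) * (μo y + μp y) := by
  intro S KS0 ΔSp ΔSm Tp Tm rm rp KD0 ΔDp ΔDm hT f
  obtain ⟨T, hTS, hp, ho, hm⟩ : ∃ T : Finset ℕ, ↑T ⊆ S ∧ (∀ x ∈ S, x ∉ T → μp x = 0) ∧
      (∀ x ∈ S, x ∉ T → μo x = 0) ∧ (∀ x ∈ S, x ∉ T → μm x = 0) := by
    refine ⟨(((hμpFin.union hμoFin).union hμmFin).inter_of_left S).toFinset, by simp, ?_, ?_, ?_⟩ <;>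
      exact fun x hxS hxT => by_contra fun hx => hxT (by simp [hxS, hx])
  have hop : ∀ x ∈ S, x ∉ T → μo x + μp x = 0 := fun x hx hxT => by
    rw [ho x hx hxT, hp x hx hxT, add_zero]
  have hnorm : ∀ x y, μo y ≠ 0 → ∑ z ∈ T, rp x y z * μm z = Kp x y := fun x y hy =>
    sum_mul_div_mul_eq_of_sum_eq T (finsum_mem_mul_eq_sum hTS hm _).symm (hT y hy).2.ne' _
  have hself := sum_sum_coag_of_kernel_split T f μo Kp KS0 ΔSp ΔSm
    (fun x y => min_add_max_sub_zero _ _) (fun x y => by simp only [ΔSp, hKpSymm x y, hKmSymm x y])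
  have hcross := sum_sum_sum_coag_of_rate_split T f Kp rp KD0 ΔDp ΔDm μp μo μm
    (fun x y z => by
      rw [show KD0 x y z = min (rp x y z) (rm x y z) from min_comm _ _]
      exact min_add_max_sub_zero _ _) hnorm
  simp only [finsum_mem_finsum_mem_mul_eq_sum_sum hTS ho ho,
    finsum_mem_finsum_mem_mul_eq_sum_sum hTS hp hp, finsum_mem_finsum_mem_mul_eq_sum_sum hTS hop hop,
    finsum_mem_finsum_mem_finsum_mem_mul_eq_sum_sum_sum hTS hp ho hm]
  linarith [half_sum_sum_coag_add T f hKpSymm μo μp]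

/-- The sum of the right-hand sides of the coupled limit equations for `μ⊙` and `μ⊕`
equals the right-hand side of Smoluchowski's equation with kernel `K⁺` evaluated at the
marginal `μ⁺ = μ⊙ + μ⊕`.  Consequently, if `(μ_t^⊕, μ_t^⊙, μ_t^⊖)` solves the coupled
limit system, then `μ_t^+ = μ_t^⊙ + μ_t^⊕` satisfies Smoluchowski's coagulation equation
with kernel `K⁺`. -/
theorem coupled_limit_plus_marginal_smoluchowski
    (Kp Km Khat : ℕ → ℕ → ℝ)
    (hKp : ∀ x y, 0 ≤ Kp x y) (hKm : ∀ x y, 0 ≤ Km x y)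
    (hKpSymm : ∀ x y, Kp x y = Kp y x) (hKmSymm : ∀ x y, Km x y = Km y x)
    (hKhat : ∀ x y, 0 ≤ Khat x y) (hKhatSymm : ∀ x y, Khat x y = Khat y x)
    (hMaj : ∀ x y, max (Kp x y) (Km x y) ≤ Khat x y)
    (μp μo μm : ℕ → ℝ)
    (hμp : ∀ x, 0 ≤ μp x) (hμo : ∀ x, 0 ≤ μo x) (hμm : ∀ x, 0 ≤ μm x)
    (hμpFin : (Function.support μp).Finite) (hμoFin : (Function.support μo).Finite)
    (hμmFin : (Function.support μm).Finite) :
    let S : Set ℕ := {n : ℕ | 1 ≤ n}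
    let KS0 : ℕ → ℕ → ℝ := fun x y => min (Kp x y) (Km x y)
    let ΔSp : ℕ → ℕ → ℝ := fun x y => max (Kp x y - Km x y) 0
    let ΔSm : ℕ → ℕ → ℝ := fun x y => max (Km x y - Kp x y) 0
    let Tp : ℕ → ℝ := fun y => ∑ᶠ x ∈ S, Khat x y * μp x
    let Tm : ℕ → ℝ := fun y => ∑ᶠ z ∈ S, Khat y z * μm z
    let rm : ℕ → ℕ → ℕ → ℝ := fun x y z => Khat x y * Km y z / Tp y
    let rp : ℕ → ℕ → ℕ → ℝ := fun x y z => Khat y z * Kp x y / Tm y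
    let KD0 : ℕ → ℕ → ℕ → ℝ := fun x y z => min (rm x y z) (rp x y z)
    let ΔDp : ℕ → ℕ → ℕ → ℝ := fun x y z => max (rp x y z - rm x y z) 0
    let ΔDm : ℕ → ℕ → ℕ → ℝ := fun x y z => max (rm x y z - rp x y z) 0
    (∀ y ∈ Function.support μo, 0 < Tp y ∧ 0 < Tm y) →
    ∀ f : ℕ → ℝ,
      (((1 : ℝ) / 2) * ∑ᶠ x ∈ S, ∑ᶠ y ∈ S,
            (f (x + y) - f x - f y) * KS0 x y * μo x * μo y
        - (∑ᶠ x ∈ S, ∑ᶠ y ∈ S, f x * (ΔSp x y + ΔSm x y) * μo x * μo y)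
        - (∑ᶠ x ∈ S, ∑ᶠ y ∈ S, ∑ᶠ z ∈ S,
            f y * (KD0 x y z + ΔDp x y z + ΔDm x y z) * μp x * μo y * μm z))
      +
      (((1 : ℝ) / 2) * ∑ᶠ x ∈ S, ∑ᶠ y ∈ S, f (x + y) * ΔSp x y * μo x * μo y
        + (∑ᶠ x ∈ S, ∑ᶠ y ∈ S, f x * ΔSm x y * μo x * μo y)
        + (∑ᶠ x ∈ S, ∑ᶠ y ∈ S, ∑ᶠ z ∈ S,
            (f (x + y) - f x) * (KD0 x y z + ΔDp x y z) * μp x * μo y * μm z)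
        + (∑ᶠ x ∈ S, ∑ᶠ y ∈ S, ∑ᶠ z ∈ S,
            f y * ΔDm x y z * μp x * μo y * μm z)
        + ((1 : ℝ) / 2) * ∑ᶠ x ∈ S, ∑ᶠ y ∈ S,
            (f (x + y) - f x - f y) * Kp x y * μp x * μp y)
      =
      ((1 : ℝ) / 2) * ∑ᶠ x ∈ S, ∑ᶠ y ∈ S,
          (f (x + y) - f x - f y) * Kp x y * (μo x + μp x) * (μo y + μp y) :=
  coupled_limit_plus_marginal_smoluchowski_general Kp Km Khat hKpSymm hKmSymm μp μo μm hμpFin hμoFin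
    hμmFin
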